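/- arXiv:1205.1090 — 5 statements merged into one kernel-verified Lean document; each statement's English description precedes it below -/
import Mathlib

section
/- Let P be a poset on [n], E an equivalence relation on I(P) with dual relation E*, 𝔽_q a finite field, χ a nontrivial additive character of 𝔽_q, u ∈ 𝔽_q^n a nonzero vector, and C = 𝔽_q·u the one-dimensional linear P-code generated by u. Then for every order ideal J of P, q · A_{J̄^c,E*}(C^⊥) = |S_{J̄^c,E*}| + (q−1) · Σ_{v ∈ S_{J̄^c,E*}} χ(u·v). (Corollary 3.2(ii).) -/
open scoped BigOperators
open Finset

noncomputable section
open scoped Classical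

/-- `I ⊆ [n]` is an order ideal with respect to the order relation `le`. -/
def IsIdeal {n : ℕ} (le : Fin n → Fin n → Prop) (I : Finset (Fin n)) : Prop :=
  ∀ a ∈ I, ∀ b, le b a → b ∈ I

/-- `⟨X⟩_P` : the smallest order ideal (w.r.t. `le`) containing `X`. -/
def idealCl {n : ℕ} (le : Fin n → Fin n → Prop) (X : Finset (Fin n)) : Finset (Fin n) :=
  Finset.univ.filter fun b => ∃ a ∈ X, le b a

/-- `M(A)` : the set of maximal elements of `A` with respect to `le`. -/
def maxSet {n : ℕ} (le : Fin n → Fin n → Prop) (A : Finset (Fin n)) : Finset (Fin n) :=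
  A.filter fun a => ∀ b ∈ A, le a b → b = a

/-- `E` is an equivalence relation on the set of order ideals of the poset `le`. -/
def EqvOnIdeals {n : ℕ} (le : Fin n → Fin n → Prop)
    (E : Finset (Fin n) → Finset (Fin n) → Prop) : Prop :=
  (∀ I J, E I J → IsIdeal le I ∧ IsIdeal le J) ∧
  (∀ I, IsIdeal le I → E I I) ∧
  (∀ I J, E I J → E J I) ∧
  (∀ I J K, E I J → E J K → E I K)

/-- support of a vector -/
def supp {n : ℕ} {F : Type} [Field F] [Fintype F] (v : Fin n → F) : Finset (Fin n) :=
  Finset.univ.filter fun i => v i ≠ 0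

/-- standard dot product -/
def dot {n : ℕ} {F : Type} [Field F] [Fintype F] (u v : Fin n → F) : F := ∑ i, u i * v i

/-- the sphere `S_I = {v : ⟨supp v⟩_P = I}` -/
def sph {n : ℕ} (F : Type) [Field F] [Fintype F] (le : Fin n → Fin n → Prop)
    (I : Finset (Fin n)) : Finset (Fin n → F) :=
  Finset.univ.filter fun v => idealCl le (supp v) = I

/-- the dual sphere `S_{J^c} = {v : ⟨supp v⟩_{P*} = J^c}` -/
def sphD {n : ℕ} (F : Type) [Field F] [Fintype F] (le : Fin n → Fin n → Prop)
    (J : Finset (Fin n)) : Finset (Fin n → F) :=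
  Finset.univ.filter fun v => idealCl (fun a b => le b a) (supp v) = Jᶜ

/-- the `E`-sphere `S_{Ī,E} = {v : (⟨supp v⟩_P, I) ∈ E}` -/
def sphE {n : ℕ} (F : Type) [Field F] [Fintype F] (le : Fin n → Fin n → Prop)
    (E : Finset (Fin n) → Finset (Fin n) → Prop) (I : Finset (Fin n)) :
    Finset (Fin n → F) :=
  Finset.univ.filter fun v => E (idealCl le (supp v)) I

/-- the `E*`-sphere `S_{J̄^c,E*} = {v : ⟨supp v⟩_{P*} = K^c for some ideal K with (K,J) ∈ E}` -/
def sphED {n : ℕ} (F : Type) [Field F] [Fintype F] (le : Fin n → Fin n → Prop)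
    (E : Finset (Fin n) → Finset (Fin n) → Prop) (J : Finset (Fin n)) :
    Finset (Fin n → F) :=
  Finset.univ.filter fun v =>
    ∃ K, IsIdeal le K ∧ E K J ∧ idealCl (fun a b => le b a) (supp v) = Kᶜ

/-- the dual code `C^⊥` -/
def dualCode {n : ℕ} {F : Type} [Field F] [Fintype F] (C : Submodule F (Fin n → F)) :
    Submodule F (Fin n → F) where
  carrier := {u | ∀ v ∈ C, dot u v = 0}
  zero_mem' := by intro v hv; simp [dot]
  add_mem' := by
    intro a b ha hb v hv
    have h1 := ha v hv
    have h2 := hb v hv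
    simp only [dot, Pi.add_apply] at *
    simp [add_mul, Finset.sum_add_distrib, h1, h2]
  smul_mem' := by
    intro c a ha v hv
    have h1 := ha v hv
    simp only [dot, Pi.smul_apply, smul_eq_mul] at *
    simp [mul_assoc, ← Finset.mul_sum, h1]

/-- `A_{Ī,E}(C) = |C ∩ S_{Ī,E}|` -/
def AE {n : ℕ} {F : Type} [Field F] [Fintype F] (le : Fin n → Fin n → Prop)
    (E : Finset (Fin n) → Finset (Fin n) → Prop)
    (C : Submodule F (Fin n → F)) (I : Finset (Fin n)) : ℕ :=
  ((sphE F le E I).filter fun v => v ∈ C).card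

/-- `A_{J̄^c,E*}(D) = |D ∩ S_{J̄^c,E*}|` -/
def AED {n : ℕ} {F : Type} [Field F] [Fintype F] (le : Fin n → Fin n → Prop)
    (E : Finset (Fin n) → Finset (Fin n) → Prop)
    (D : Submodule F (Fin n → F)) (J : Finset (Fin n)) : ℕ :=
  ((sphED F le E J).filter fun v => v ∈ D).card

/-- `E` is a MacWilliams-type equivalence relation (w.r.t. the field `F`). -/
def IsMacWilliamsType {n : ℕ} (F : Type) [Field F] [Fintype F]
    (le : Fin n → Fin n → Prop) (E : Finset (Fin n) → Finset (Fin n) → Prop) : Prop :=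
  ∀ C₁ C₂ : Submodule F (Fin n → F),
    (∀ I, IsIdeal le I → AE le E C₁ I = AE le E C₂ I) →
    ∀ J, IsIdeal le J → AED le E (dualCode C₁) J = AED le E (dualCode C₂) J

/-- a hierarchical poset (ordinal sum of antichains) -/
def IsHierarchical {n : ℕ} (le : Fin n → Fin n → Prop) : Prop :=
  ∃ l : Fin n → ℕ, ∀ i j, (le i j ∧ i ≠ j) ↔ l i < l j

/-- `σ` is an automorphism of the poset `le`. -/
def IsAut {n : ℕ} (le : Fin n → Fin n → Prop) (σ : Equiv.Perm (Fin n)) : Prop :=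
  ∀ x y, le x y ↔ le (σ x) (σ y)

/-- `A` and `B` are order-isomorphic with the induced orders. -/
def OrdIso {n : ℕ} (le : Fin n → Fin n → Prop) (A B : Finset (Fin n)) : Prop :=
  ∃ e : {x // x ∈ A} ≃ {x // x ∈ B}, ∀ a b : {x // x ∈ A}, le ↑a ↑b ↔ le ↑(e a) ↑(e b)



lemma supp_smul_ne {n : ℕ} {F : Type} [Field F] [Fintype F] {c : F} (hc : c ≠ 0)
    (v : Fin n → F) : supp (c • v) = supp v := by
  ext i; simp [supp, hc]

lemma dot_smul_right {n : ℕ} {F : Type} [Field F] [Fintype F] (c : F) (u v : Fin n → F) :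
    dot u (c • v) = c * dot u v := by
  simp [dot, Finset.mul_sum, mul_comm, mul_left_comm]

lemma sphED_smul_mem {n : ℕ} {F : Type} [Field F] [Fintype F]
    (le : Fin n → Fin n → Prop) (E : Finset (Fin n) → Finset (Fin n) → Prop)
    (J : Finset (Fin n)) {c : F} (hc : c ≠ 0) {v : Fin n → F}
    (hv : v ∈ sphED F le E J) : c • v ∈ sphED F le E J := by
  simpa [sphED, supp_smul_ne hc] using hv

/-- Corollary 3.2(ii): `q · A_{J̄^c,E*}(C^⊥) = |S_{J̄^c,E*}| + (q−1)·Σ_{v ∈ S_{J̄^c,E*}} χ(u·v)`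
for the one-dimensional code `C` generated by `u ≠ 0`. -/
theorem stmt_3 {n : ℕ} (hn : 0 < n) (le : Fin n → Fin n → Prop)
    [IsPartialOrder (Fin n) le]
    (E : Finset (Fin n) → Finset (Fin n) → Prop) (hE : EqvOnIdeals le E)
    (F : Type) [Field F] [Fintype F] (χ : AddChar F ℂ) (hχ : ∃ a, χ a ≠ 1)
    (u : Fin n → F) (hu : u ≠ 0)
    (J : Finset (Fin n)) (hJ : IsIdeal le J) :
    (Fintype.card F : ℂ) * (AED le E (dualCode (Submodule.span F {u})) J : ℂ) =
      ((sphED F le E J).card : ℂ) +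
        ((Fintype.card F : ℂ) - 1) * ∑ v ∈ sphED F le E J, χ (dot u v) := by
  classical
  -- membership in the dual code
  have hmem : ∀ v : Fin n → F, (v ∈ dualCode (Submodule.span F {u})) ↔ dot u v = 0 := by
    intro v
    have hcomm : dot v u = dot u v := by simp [dot, mul_comm]
    constructor
    · intro h
      have := h u (Submodule.mem_span_singleton_self u)
      rwa [hcomm] at this
    · intro h w hw
      obtain ⟨a, rfl⟩ := Submodule.mem_span_singleton.mp hw
      have h1 : dot v (a • u) = a * dot v u := dot_smul_right a v u
      rw [h1, hcomm, h, mul_zero]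
  -- the full character sum vanishes
  have hsum0 : ∑ a : F, χ a = 0 := by
    rw [AddChar.sum_eq_zero_iff_ne_zero]
    obtain ⟨a, ha⟩ := hχ
    intro h; exact ha (by simp [h])
  -- the key orthogonality relation
  have key : ∀ t : F, (∑ c : F, χ (c * t)) = if t = 0 then (Fintype.card F : ℂ) else 0 := by
    intro t
    by_cases ht : t = 0
    · simp [ht]
    · rw [if_neg ht, ← hsum0]
      exact Fintype.sum_equiv (Equiv.mulRight₀ t ht) _ _ (fun c => rfl)
  set S := sphED F le E J with hS
  -- rescaling invariance of the character sum over the sphere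
  have hscale : ∀ c : F, c ≠ 0 →
      (∑ v ∈ S, χ (c * dot u v)) = ∑ v ∈ S, χ (dot u v) := by
    intro c hc
    refine Finset.sum_nbij' (fun v => c • v) (fun v => c⁻¹ • v) ?_ ?_ ?_ ?_ ?_
    · intro v hv; exact sphED_smul_mem le E J hc hv
    · intro v hv; exact sphED_smul_mem le E J (inv_ne_zero hc) hv
    · intro v hv; simp [smul_smul, inv_mul_cancel₀ hc]
    · intro v hv; simp [smul_smul, mul_inv_cancel₀ hc]
    · intro v hv; rw [dot_smul_right]
  -- express A as a sum of indicators
  have hA : ((AED le E (dualCode (Submodule.span F {u})) J : ℂ))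
      = ∑ v ∈ S, (if dot u v = 0 then (1 : ℂ) else 0) := by
    rw [AED]
    rw [show ((sphED F le E J).filter fun v => v ∈ dualCode (Submodule.span F {u}))
        = (sphED F le E J).filter (fun v => dot u v = 0) from
      Finset.filter_congr (fun v _ => by simp [hmem v])]
    rw [Finset.sum_boole]
  calc (Fintype.card F : ℂ) * (AED le E (dualCode (Submodule.span F {u})) J : ℂ)
      = ∑ v ∈ S, (if dot u v = 0 then (Fintype.card F : ℂ) else 0) := by
        rw [hA, Finset.mul_sum]
        refine Finset.sum_congr rfl fun v _ => ?_
        split_ifs <;> simp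
    _ = ∑ v ∈ S, ∑ c : F, χ (c * dot u v) := by
        refine Finset.sum_congr rfl fun v _ => (key (dot u v)).symm
    _ = ∑ c : F, ∑ v ∈ S, χ (c * dot u v) := Finset.sum_comm
    _ = (∑ v ∈ S, χ ((0 : F) * dot u v))
        + ∑ c ∈ Finset.univ.erase (0 : F), ∑ v ∈ S, χ (c * dot u v) :=
        (Finset.add_sum_erase _ _ (Finset.mem_univ 0)).symm
    _ = (S.card : ℂ) + ((Fintype.card F : ℂ) - 1) * ∑ v ∈ S, χ (dot u v) := by
        congr 1
        · simp
        · rw [Finset.sum_congr rfl (fun c hc => hscale c (Finset.ne_of_mem_erase hc))]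
          rw [Finset.sum_const, Finset.card_erase_of_mem (Finset.mem_univ 0),
            Finset.card_univ, nsmul_eq_mul]
          have h1 : (1 : ℕ) ≤ Fintype.card F := Fintype.card_pos
          push_cast [Nat.cast_sub h1]
          ring


end
end

section
/- Let P be a poset on [n], E an equivalence relation on I(P) with dual relation E*, 𝔽_q a finite field, and χ a nontrivial additive character of 𝔽_q. Suppose (a) for all order ideals I, J and all u, u' ∈ S_{Ī,E}, Σ_{v ∈ S_{J̄^c,E*}} χ(u·v) = Σ_{v ∈ S_{J̄^c,E*}} χ(u'·v), and (b) for all order ideals I, J and all v, v' ∈ S_{J̄^c,E*}, Σ_{u ∈ S_{Ī,E}} χ(u·v) = Σ_{u ∈ S_{Ī,E}} χ(u·v'). Then E is a MacWilliams-type equivalence relation: for all linear P-codes C₁, C₂ ⊆ 𝔽_q^n, if A_{Ī,E}(C₁) = A_{Ī,E}(C₂) for all order ideals I, then A_{J̄^c,E*}(C₁^⊥) = A_{J̄^c,E*}(C₂^⊥) for all order ideals J. (Theorem 3.3, (ii) ⇒ (i).) -/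
open scoped BigOperators
open Finset

noncomputable section
open scoped Classical

/-! By orthogonality of characters on a code `C`, for every set `S` of vectors
`|C| · |S ∩ C^⊥| = ∑_{u ∈ C} ∑_{v ∈ S} χ(u · v)`. For `S = S_{J̄^c,E*}`, condition (a) makes the
inner sum a function of the `E`-class of `⟨supp u⟩_P` alone, and the sum over `C` of such a
function is a fixed linear combination of the numbers `A_{Ī,E}(C)`. Taking the constant function
`1` shows that `|C|` is determined by these numbers as well, so `|S ∩ C^⊥|` is. -/

theorem AddChar.sum_comp_linearMap_eq_ite {F M R : Type*} [Field F] [AddCommGroup M]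
    [Module F M] [Fintype M] [CommRing R] [IsDomain R] {χ : AddChar F R} (hχ : χ ≠ 0)
    (φ : M →ₗ[F] F) : ∑ x, χ (φ x) = if φ = 0 then (Fintype.card M : R) else 0 := by
  have hsum := AddChar.sum_eq_ite (χ.compAddMonoidHom φ.toAddMonoidHom)
  simp only [AddChar.compAddMonoidHom_apply, LinearMap.toAddMonoidHom_coe] at hsum
  rw [hsum]
  congr 1
  refine propext ⟨fun hψ => ?_, fun hφ => by ext; simp [hφ]⟩
  by_contra hφ
  obtain ⟨x, hx⟩ := DFunLike.ne_iff.1 hφ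
  obtain ⟨a, ha⟩ := AddChar.ne_one_iff.1 hχ
  refine ha ?_
  simpa [div_mul_cancel₀ a hx] using DFunLike.congr_fun hψ ((a / φ x) • x)

theorem sum_addChar_dot_codewords_eq_ite {n : ℕ} {F R : Type} [Field F] [Fintype F]
    [CommRing R] [IsDomain R] {χ : AddChar F R} (hχ : χ ≠ 0) (C : Submodule F (Fin n → F))
    (v : Fin n → F) :
    ∑ u ∈ univ.filter (· ∈ C), χ (dot u v)
      = if v ∈ dualCode C then (#(univ.filter (· ∈ C)) : R) else 0 := by
  rw [sum_subtype _ (p := (· ∈ C)) (by simp), ← Fintype.card_subtype]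
  convert AddChar.sum_comp_linearMap_eq_ite hχ ((dotProductBilin F F v).comp C.subtype) using 2
  · simp [dot, dotProduct, mul_comm]
  · simp [LinearMap.ext_iff, dualCode, dot, dotProduct]

theorem Finset.sum_comp_eq_sum_div_card_mul_card {α β K : Type*} [Fintype β] [Field K]
    [CharZero K] {E : β → β → Prop} (hsymm : ∀ x y, E x y → E y x)
    (htrans : ∀ x y z, E x y → E y z → E x z) {key : α → β} (hkey : ∀ a, E (key a) (key a))
    {c : β → K} (hc : ∀ x y, E x y → c x = c y) {T : Finset β} (hT : ∀ x y, E x y → y ∈ T)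
    (s : Finset α) :
    ∑ a ∈ s, c (key a) = ∑ b ∈ T, c b / #{b' | E b b'} * #{a ∈ s | E (key a) b} := by
  -- `a` is counted once for each `b` in the class of `key a`; the division by the class size
  -- cancels this multiplicity, so no choice of class representatives is needed.
  have hclass : ∀ a, ∀ b ∈ T.filter (E (key a)),
      c b / #{b' | E b b'} = c (key a) / #{b' | E (key a) b'} := by
    intro a b hb
    have hab := (mem_filter.1 hb).2
    rw [hc _ _ hab, filter_congr fun b' _ =>
      ⟨htrans _ _ _ hab, htrans _ _ _ (hsymm _ _ hab)⟩]
  have hcard : ∀ a, T.filter (E (key a)) = univ.filter (E (key a)) := by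
    intro a
    ext b
    simp only [mem_filter, mem_univ, true_and, and_iff_right_iff_imp]
    exact hT _ _
  simp_rw [card_filter _ s, Nat.cast_sum, Nat.cast_ite, Nat.cast_one, Nat.cast_zero, mul_sum,
    mul_boole]
  rw [sum_comm]
  simp_rw [← sum_filter]
  refine sum_congr rfl fun a _ => ?_
  rw [sum_congr rfl (hclass a), sum_const, nsmul_eq_mul, hcard a, mul_div_cancel₀]
  exact Nat.cast_ne_zero.2 (card_ne_zero_of_mem (mem_filter.2 ⟨mem_univ _, hkey a⟩))

section PosetCode

variable {n : ℕ} {le : Fin n → Fin n → Prop}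

theorem isIdeal_idealCl [IsTrans (Fin n) le] (X : Finset (Fin n)) :
    IsIdeal le (idealCl le X) := by
  intro a ha b hba
  simp only [idealCl, mem_filter, mem_univ, true_and] at ha ⊢
  obtain ⟨c, hc, hac⟩ := ha
  exact ⟨c, hc, _root_.trans hba hac⟩

theorem idealCl_eq_self [Std.Refl le] {I : Finset (Fin n)} (hI : IsIdeal le I) :
    idealCl le I = I := by
  ext b
  simp only [idealCl, mem_filter, mem_univ, true_and]
  exact ⟨fun ⟨a, ha, hba⟩ => hI a ha b hba, fun hb => ⟨b, hb, refl b⟩⟩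

variable {F : Type} [Field F] [Fintype F]

theorem supp_indicator_one (I : Finset (Fin n)) :
    supp ((I : Set (Fin n)).indicator (1 : Fin n → F)) = I := by
  ext i
  simp [supp, Set.indicator_apply]

theorem card_mul_card_filter_dualCode_eq_sum {R : Type} [CommRing R] [IsDomain R]
    {χ : AddChar F R} (hχ : χ ≠ 0) (C : Submodule F (Fin n → F)) (S : Finset (Fin n → F)) :
    (#(univ.filter (· ∈ C)) * #(S.filter (· ∈ dualCode C)) : R)
      = ∑ u ∈ univ.filter (· ∈ C), ∑ v ∈ S, χ (dot u v) := by
  rw [sum_comm]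
  simp_rw [sum_addChar_dot_codewords_eq_ite hχ, ← sum_filter, sum_const, nsmul_eq_mul, mul_comm]

variable {K : Type*} [Field K] [CharZero K] {E : Finset (Fin n) → Finset (Fin n) → Prop}

theorem sum_codewords_eq_sum_AE [IsTrans (Fin n) le] (hE : EqvOnIdeals le E)
    {c : Finset (Fin n) → K} (hc : ∀ I J, E I J → c I = c J) (C : Submodule F (Fin n → F)) :
    ∑ u ∈ univ.filter (· ∈ C), c (idealCl le (supp u))
      = ∑ I ∈ univ.filter (IsIdeal le), c I / #{J | E I J} * AE le E C I := by
  obtain ⟨hideal, hrefl, hsymm, htrans⟩ := hE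
  rw [sum_comp_eq_sum_div_card_mul_card hsymm htrans (fun u => hrefl _ (isIdeal_idealCl _)) hc
    (T := univ.filter (IsIdeal le)) (fun I J h => by simpa using (hideal I J h).2)]
  refine sum_congr rfl fun I _ => ?_
  rw [AE, sphE, filter_filter, filter_filter]
  simp_rw [and_comm]

theorem sum_codewords_eq_of_AE_eq [IsPartialOrder (Fin n) le] (hE : EqvOnIdeals le E)
    {f : (Fin n → F) → K} (hf : ∀ I, IsIdeal le I → ∀ u ∈ sphE F le E I, ∀ u' ∈ sphE F le E I,
      f u = f u') {C₁ C₂ : Submodule F (Fin n → F)}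
    (hA : ∀ I, IsIdeal le I → AE le E C₁ I = AE le E C₂ I) :
    ∑ u ∈ univ.filter (· ∈ C₁), f u = ∑ u ∈ univ.filter (· ∈ C₂), f u := by
  set c : Finset (Fin n) → K := fun I => f ((I : Set (Fin n)).indicator 1)
  have mem_sphE_indicator : ∀ I J, IsIdeal le I → E I J →
      (I : Set (Fin n)).indicator 1 ∈ sphE F le E J := fun I J hI hIJ => by
    simpa [sphE, supp_indicator_one, idealCl_eq_self hI] using hIJ
  have hc : ∀ I J, E I J → c I = c J := fun I J hIJ => by
    have hJ := (hE.1 I J hIJ).2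
    exact hf J hJ _ (mem_sphE_indicator I J (hE.1 I J hIJ).1 hIJ) _
      (mem_sphE_indicator J J hJ (hE.2.1 J hJ))
  have hfc : ∀ u, f u = c (idealCl le (supp u)) := fun u => by
    have hK := isIdeal_idealCl (le := le) (supp u)
    exact hf _ hK u (by simpa [sphE] using hE.2.1 _ hK) _
      (mem_sphE_indicator _ _ hK (hE.2.1 _ hK))
  simp_rw [hfc, sum_codewords_eq_sum_AE hE hc]
  exact sum_congr rfl fun I hI => by rw [hA I (mem_filter.1 hI).2]

end PosetCode

theorem stmt_4_general {n : ℕ} (le : Fin n → Fin n → Prop)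
    [IsPartialOrder (Fin n) le]
    (E : Finset (Fin n) → Finset (Fin n) → Prop) (hE : EqvOnIdeals le E)
    (F : Type) [Field F] [Fintype F] (χ : AddChar F ℂ) (hχ : ∃ a, χ a ≠ 1)
    (ha : ∀ I J : Finset (Fin n), IsIdeal le I → IsIdeal le J →
      ∀ u ∈ sphE F le E I, ∀ u' ∈ sphE F le E I,
        ∑ v ∈ sphED F le E J, χ (dot u v) = ∑ v ∈ sphED F le E J, χ (dot u' v)) :
    IsMacWilliamsType F le E := by
  intro C₁ C₂ hA J hJ
  have hχ0 : χ ≠ 0 := AddChar.ne_one_iff.2 hχ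
  have hcard : (#(univ.filter (· ∈ C₁)) : ℂ) = #(univ.filter (· ∈ C₂)) := by
    simpa using sum_codewords_eq_of_AE_eq hE (f := fun _ => (1 : ℂ)) (fun _ _ _ _ _ _ => rfl) hA
  have hsum := sum_codewords_eq_of_AE_eq hE (fun I hI => ha I J hI hJ) hA
  rw [← card_mul_card_filter_dualCode_eq_sum hχ0,
    ← card_mul_card_filter_dualCode_eq_sum hχ0, ← hcard] at hsum
  have hne : (#(univ.filter (· ∈ C₁)) : ℂ) ≠ 0 :=
    Nat.cast_ne_zero.2 (card_ne_zero_of_mem (mem_filter.2 ⟨mem_univ _, C₁.zero_mem⟩))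
  exact_mod_cast mul_left_cancel₀ hne hsum

/-- Theorem 3.3, (ii) ⇒ (i): conditions (a) and (b) imply that `E` is of MacWilliams type. -/
theorem stmt_4 {n : ℕ} (hn : 0 < n) (le : Fin n → Fin n → Prop)
    [IsPartialOrder (Fin n) le]
    (E : Finset (Fin n) → Finset (Fin n) → Prop) (hE : EqvOnIdeals le E)
    (F : Type) [Field F] [Fintype F] (χ : AddChar F ℂ) (hχ : ∃ a, χ a ≠ 1)
    (ha : ∀ I J : Finset (Fin n), IsIdeal le I → IsIdeal le J →
      ∀ u ∈ sphE F le E I, ∀ u' ∈ sphE F le E I,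
        ∑ v ∈ sphED F le E J, χ (dot u v) = ∑ v ∈ sphED F le E J, χ (dot u' v))
    (hb : ∀ I J : Finset (Fin n), IsIdeal le I → IsIdeal le J →
      ∀ v ∈ sphED F le E J, ∀ v' ∈ sphED F le E J,
        ∑ u ∈ sphE F le E I, χ (dot u v) = ∑ u ∈ sphE F le E I, χ (dot u v')) :
    IsMacWilliamsType F le E :=
  stmt_4_general le E hE F χ hχ ha

end
end

section
/- Let P be a poset on [n], E an equivalence relation on I(P) with dual relation E*, such that the E-class of the empty ideal is a singleton ((∅,K) ∈ E implies K = ∅), 𝔽_q a finite field, and χ a nontrivial additive character of 𝔽_q. If E is a MacWilliams-type equivalence relation (for all linear P-codes C₁, C₂ ⊆ 𝔽_q^n, equality of the numbers A_{Ī,E}(C₁) = A_{Ī,E}(C₂) for all order ideals I implies A_{J̄^c,E*}(C₁^⊥) = A_{J̄^c,E*}(C₂^⊥) for all order ideals J), then for all order ideals I, J and all u, u' ∈ S_{Ī,E}: Σ_{v ∈ S_{J̄^c,E*}} χ(u·v) = Σ_{v ∈ S_{J̄^c,E*}} χ(u'·v). (Theorem 3.3, (i) ⇒ (ii)(a).)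 -/
open scoped BigOperators
open Finset

noncomputable section
open scoped Classical

/-!
Apply the MacWilliams property to the one-dimensional codes `F ∙ u` and `F ∙ u'`. For `c ≠ 0`
the vector `c • u` has the support of `u`, so both lines have the same `E`-distribution, hence
their duals have the same `E*`-distribution. By orthogonality of `χ`, a vector set `S` stable
under nonzero scalars satisfies
`q · #(S ∩ x^⊥) = #S + (q - 1) · ∑_{v ∈ S} χ (x ⬝ v)`; taking `S = S_{J̄^c,E*}` turns equal
counts into equal character sums. The span of `0` is not a line;
that `∅` is alone in its `E`-class rules this case out, as it forces `u = 0 ↔ u' = 0`.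
-/

section

variable {n : ℕ} {F : Type} [Field F] [Fintype F]

lemma supp_eq_empty_iff {v : Fin n → F} : supp v = ∅ ↔ v = 0 := by
  simp [supp, filter_eq_empty_iff, funext_iff]

lemma supp_smul {c : F} (hc : c ≠ 0) (v : Fin n → F) : supp (c • v) = supp v := by
  ext i
  simp [supp, hc]

lemma idealCl_eq_empty_iff (le : Fin n → Fin n → Prop) [Std.Refl le] {X : Finset (Fin n)} :
    idealCl le X = ∅ ↔ X = ∅ := by
  refine ⟨fun h => eq_empty_of_forall_notMem fun a ha => ?_, fun h => by simp [idealCl, h]⟩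
  have : a ∈ idealCl le X := by simpa [idealCl] using ⟨a, ha, refl_of le a⟩
  simp [h] at this

lemma dot_eq_dotProduct (u v : Fin n → F) : dot u v = u ⬝ᵥ v := rfl

lemma mem_dualCode_span_singleton {x w : Fin n → F} :
    w ∈ dualCode (F ∙ x) ↔ dot x w = 0 := by
  show (∀ v ∈ F ∙ x, dot w v = 0) ↔ _
  simp only [dot_eq_dotProduct]
  refine ⟨fun h => ?_, fun h v hv => ?_⟩
  · simpa [dotProduct_comm] using h x (Submodule.mem_span_singleton_self x)
  · obtain ⟨c, rfl⟩ := Submodule.mem_span_singleton.mp hv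
    simp [dotProduct_comm w, h]

end

section

variable {F M : Type*} [Field F] [AddCommGroup M] [Module F M]

lemma card_filter_mem_span_singleton [Fintype F] [DecidableEq M] {x : M} (hx : x ≠ 0)
    (s : Finset M) :
    #{v ∈ s | v ∈ F ∙ x} = #{c : F | c • x ∈ s} := by
  rw [← card_image_of_injective _ (smul_left_injective F hx)]
  congr 1
  ext v
  simp only [mem_filter, mem_image, mem_univ, true_and, Submodule.mem_span_singleton]
  constructor
  · rintro ⟨hv, c, rfl⟩
    exact ⟨c, hv, rfl⟩
  · rintro ⟨c, hc, rfl⟩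
    exact ⟨hc, c, rfl⟩

lemma sum_smul_eq_sum_of_smul_mem {β : Type*} [AddCommMonoid β] {S : Finset M}
    (hS : ∀ c : F, c ≠ 0 → ∀ v ∈ S, c • v ∈ S) {c : F} (hc : c ≠ 0) (g : M → β) :
    ∑ v ∈ S, g (c • v) = ∑ v ∈ S, g v :=
  sum_nbij' (c • ·) (c⁻¹ • ·) (hS c hc) (hS c⁻¹ (inv_ne_zero hc))
    (fun v _ => by simp [smul_smul, hc]) (fun v _ => by simp [smul_smul, hc]) (fun _ _ => rfl)

omit [AddCommGroup M] [Module F M] in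
lemma sum_sum_addChar_mul [Fintype F] {χ : AddChar F ℂ} (hχ : χ.IsPrimitive) (S : Finset M)
    (g : M → F) :
    ∑ c : F, ∑ v ∈ S, χ (c * g v) = Fintype.card F * #{v ∈ S | g v = 0} := by
  rw [sum_comm]
  simp_rw [AddChar.sum_mulShift _ hχ]
  push_cast [sum_ite, sum_const_zero, sum_const, nsmul_eq_mul]
  ring

lemma card_mul_card_filter_eq_zero [Fintype F] {χ : AddChar F ℂ} (hχ : χ.IsPrimitive)
    (f : M →ₗ[F] F) {S : Finset M} (hS : ∀ c : F, c ≠ 0 → ∀ v ∈ S, c • v ∈ S) :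
    Fintype.card F * (#{v ∈ S | f v = 0} : ℂ) =
      #S + (Fintype.card F - 1) * ∑ v ∈ S, χ (f v) := by
  have hunit : ∀ c ∈ univ.erase (0 : F), ∑ v ∈ S, χ (c * f v) = ∑ v ∈ S, χ (f v) :=
    fun c hc => by
      simpa using sum_smul_eq_sum_of_smul_mem hS (ne_of_mem_erase hc) (fun v => χ (f v))
  rw [← sum_sum_addChar_mul hχ, ← add_sum_erase _ _ (mem_univ 0), sum_congr rfl hunit,
    sum_const, card_erase_of_mem (mem_univ _), card_univ, nsmul_eq_mul,
    Nat.cast_sub Fintype.card_pos]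
  simp

end

section

variable {n : ℕ} {F : Type} [Field F] [Fintype F] (le : Fin n → Fin n → Prop)
  (E : Finset (Fin n) → Finset (Fin n) → Prop)

lemma smul_mem_sphE_iff {c : F} (hc : c ≠ 0) {u : Fin n → F} {I : Finset (Fin n)} :
    c • u ∈ sphE F le E I ↔ u ∈ sphE F le E I := by
  simp [sphE, supp_smul hc]

lemma smul_mem_sphED {c : F} (hc : c ≠ 0) {v : Fin n → F} {J : Finset (Fin n)}
    (hv : v ∈ sphED F le E J) : c • v ∈ sphED F le E J := by
  simpa [sphED, supp_smul hc] using hv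

variable {le E}

lemma mem_sphE_iff_of_mem (hE : EqvOnIdeals le E) {u : Fin n → F} {I I' : Finset (Fin n)}
    (hu : u ∈ sphE F le E I) : u ∈ sphE F le E I' ↔ E I I' := by
  obtain ⟨-, -, hsymm, htrans⟩ := hE
  simp only [sphE, mem_filter, mem_univ, true_and] at hu ⊢
  exact ⟨htrans _ _ _ (hsymm _ _ hu), htrans _ _ _ hu⟩

lemma eq_zero_of_mem_sphE [Std.Refl le] (hE : EqvOnIdeals le E) (hsing : ∀ K, E ∅ K → K = ∅)
    {u : Fin n → F} {I : Finset (Fin n)} (h0 : (0 : Fin n → F) ∈ sphE F le E I)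
    (hu : u ∈ sphE F le E I) : u = 0 := by
  obtain ⟨-, -, hsymm, -⟩ := hE
  have hI : I = ∅ := hsing I (by simpa [sphE, idealCl, supp] using h0)
  subst hI
  have hcl : idealCl le (supp u) = ∅ := hsing _ (hsymm _ _ (by simpa [sphE] using hu))
  rwa [idealCl_eq_empty_iff, supp_eq_empty_iff] at hcl

lemma AE_span_singleton_eq (hE : EqvOnIdeals le E) {u u' : Fin n → F} {I : Finset (Fin n)}
    (hu : u ∈ sphE F le E I) (hu' : u' ∈ sphE F le E I) (h0 : u ≠ 0) (h0' : u' ≠ 0)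
    (I' : Finset (Fin n)) : AE le E (F ∙ u) I' = AE le E (F ∙ u') I' := by
  have hsmul : ∀ c : F, c • u ∈ sphE F le E I' ↔ c • u' ∈ sphE F le E I' := fun c => by
    rcases eq_or_ne c 0 with rfl | hc
    · simp
    · rw [smul_mem_sphE_iff le E hc, smul_mem_sphE_iff le E hc, mem_sphE_iff_of_mem hE hu,
        mem_sphE_iff_of_mem hE hu']
  rw [AE, AE, card_filter_mem_span_singleton h0, card_filter_mem_span_singleton h0']
  exact congrArg card (filter_congr fun c _ => hsmul c)

variable (le E)

lemma AED_dualCode_span_singleton (x : Fin n → F) (J : Finset (Fin n)) :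
    AED le E (dualCode (F ∙ x)) J = #{v ∈ sphED F le E J | dot x v = 0} :=
  congrArg card (filter_congr fun _ _ => mem_dualCode_span_singleton)

lemma card_mul_AED_dualCode_span_singleton {χ : AddChar F ℂ} (hχ : χ.IsPrimitive)
    (x : Fin n → F) (J : Finset (Fin n)) :
    Fintype.card F * (AED le E (dualCode (F ∙ x)) J : ℂ) =
      #(sphED F le E J) + (Fintype.card F - 1) * ∑ v ∈ sphED F le E J, χ (dot x v) := by
  rw [AED_dualCode_span_singleton]
  exact card_mul_card_filter_eq_zero hχ (dotProductBilin F F x)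
    fun c hc v hv => smul_mem_sphED le E hc hv

end

theorem stmt_5_general {n : ℕ} (le : Fin n → Fin n → Prop)
    [IsPartialOrder (Fin n) le]
    (E : Finset (Fin n) → Finset (Fin n) → Prop) (hE : EqvOnIdeals le E)
    (hsing : ∀ K, E ∅ K → K = ∅)
    (F : Type) [Field F] [Fintype F] (χ : AddChar F ℂ) (hχ : ∃ a, χ a ≠ 1)
    (hMW : IsMacWilliamsType F le E) :
    ∀ I J : Finset (Fin n), IsIdeal le I → IsIdeal le J →
      ∀ u ∈ sphE F le E I, ∀ u' ∈ sphE F le E I,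
        ∑ v ∈ sphED F le E J, χ (dot u v) = ∑ v ∈ sphED F le E J, χ (dot u' v) := by
  intro I J _ hJ u hu u' hu'
  rcases eq_or_ne u 0 with rfl | h0
  · rw [eq_zero_of_mem_sphE hE hsing hu hu']
  have h0' : u' ≠ 0 := fun h => h0 (eq_zero_of_mem_sphE hE hsing (h ▸ hu') hu)
  have hAED := hMW _ _ (fun I' _ => AE_span_singleton_eq hE hu hu' h0 h0' I') J hJ
  have hprim : χ.IsPrimitive := .of_ne_one (AddChar.ne_one_iff.mpr hχ)
  have hq : (Fintype.card F - 1 : ℂ) ≠ 0 :=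
    sub_ne_zero.mpr (by exact_mod_cast Fintype.one_lt_card.ne')
  refine mul_left_cancel₀ hq (add_left_cancel (a := (#(sphED F le E J) : ℂ)) ?_)
  rw [← card_mul_AED_dualCode_span_singleton le E hprim u J,
    ← card_mul_AED_dualCode_span_singleton le E hprim u' J, hAED]

/-- Theorem 3.3, (i) ⇒ (ii)(a): if `E` is of MacWilliams type then the character sums over
`S_{J̄^c,E*}` are constant on each `E`-sphere. -/
theorem stmt_5 {n : ℕ} (hn : 0 < n) (le : Fin n → Fin n → Prop)
    [IsPartialOrder (Fin n) le]
    (E : Finset (Fin n) → Finset (Fin n) → Prop) (hE : EqvOnIdeals le E)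
    (hsing : ∀ K, E ∅ K → K = ∅)
    (F : Type) [Field F] [Fintype F] (χ : AddChar F ℂ) (hχ : ∃ a, χ a ≠ 1)
    (hMW : IsMacWilliamsType F le E) :
    ∀ I J : Finset (Fin n), IsIdeal le I → IsIdeal le J →
      ∀ u ∈ sphE F le E I, ∀ u' ∈ sphE F le E I,
        ∑ v ∈ sphED F le E J, χ (dot u v) = ∑ v ∈ sphED F le E J, χ (dot u' v) :=
  stmt_5_general le E hE hsing F χ hχ hMW

end
end

section
/- Let P be a poset on [n], E an equivalence relation on I(P) with dual relation E*, 𝔽_q a finite field, and χ a nontrivial additive character of 𝔽_q. Assume that for all order ideals I, J and all u, u' ∈ S_{Ī,E}, Σ_{v ∈ S_{J̄^c,E*}} χ(u·v) = Σ_{v ∈ S_{J̄^c,E*}} χ(u'·v). Let I₁, …, I_m be a complete set of representatives of the E-equivalence classes of I(P), and for each k choose u_k ∈ 𝔽_q^n with ⟨supp(u_k)⟩_P = I_k. Then for every linear P-code C ⊆ 𝔽_q^n and every order ideal J: |C| · A_{J̄^c,E*}(C^⊥) = Σ_{k=1}^{m} A_{Ī_k,E}(C) · (Σ_{v ∈ S_{J̄^c,E*}}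 χ(u_k·v)). (Theorem 3.3(iii)(a): the MacWilliams-type identity W(C^⊥,P*,E*) = (1/|C|) W(C,P,E) Q_{E*}.) -/
open scoped BigOperators
open Finset

noncomputable section
open scoped Classical

lemma idealCl_isIdeal {n : ℕ} (le : Fin n → Fin n → Prop)
    [IsPartialOrder (Fin n) le] (X : Finset (Fin n)) : IsIdeal le (idealCl le X) := by
  intro a ha b hb
  simp only [idealCl, Finset.mem_filter, Finset.mem_univ, true_and] at *
  obtain ⟨c, hc, hac⟩ := ha
  exact ⟨c, hc, Trans.trans hb hac⟩

lemma dot_comm {n : ℕ} {F : Type} [Field F] [Fintype F] (u v : Fin n → F) :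
    dot u v = dot v u := by
  simp [dot, mul_comm]

lemma dot_add_left {n : ℕ} {F : Type} [Field F] [Fintype F] (u w v : Fin n → F) :
    dot (u + w) v = dot u v + dot w v := by
  simp [dot, add_mul, Finset.sum_add_distrib]

lemma dot_smul_left {n : ℕ} {F : Type} [Field F] [Fintype F] (c : F) (u v : Fin n → F) :
    dot (c • u) v = c * dot u v := by
  simp [dot, Finset.mul_sum, mul_assoc]

lemma mem_dualCode {n : ℕ} {F : Type} [Field F] [Fintype F]
    (C : Submodule F (Fin n → F)) (v : Fin n → F) :
    v ∈ dualCode C ↔ ∀ w ∈ C, dot v w = 0 := Iff.rfl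

/-- Theorem 3.3(iii)(a): the MacWilliams-type identity
`W(C^⊥,P*,E*) = (1/|C|) W(C,P,E) Q_{E*}`. -/
theorem stmt_6 {n : ℕ} (hn : 0 < n) (le : Fin n → Fin n → Prop)
    [IsPartialOrder (Fin n) le]
    (E : Finset (Fin n) → Finset (Fin n) → Prop) (hE : EqvOnIdeals le E)
    (F : Type) [Field F] [Fintype F] (χ : AddChar F ℂ) (hχ : ∃ a, χ a ≠ 1)
    (ha : ∀ I J : Finset (Fin n), IsIdeal le I → IsIdeal le J →
      ∀ u ∈ sphE F le E I, ∀ u' ∈ sphE F le E I,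
        ∑ v ∈ sphED F le E J, χ (dot u v) = ∑ v ∈ sphED F le E J, χ (dot u' v))
    (m : ℕ) (Irep : Fin m → Finset (Fin n)) (hIrep : ∀ k, IsIdeal le (Irep k))
    (hcomplete : ∀ I : Finset (Fin n), IsIdeal le I → ∃! k : Fin m, E I (Irep k))
    (urep : Fin m → (Fin n → F)) (hurep : ∀ k, idealCl le (supp (urep k)) = Irep k)
    (C : Submodule F (Fin n → F)) (J : Finset (Fin n)) (hJ : IsIdeal le J) :
    (((Finset.univ.filter fun u => u ∈ C).card : ℂ)) * (AED le E (dualCode C) J : ℂ) =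
      ∑ k : Fin m, (AE le E C (Irep k) : ℂ) *
        ∑ v ∈ sphED F le E J, χ (dot (urep k) v) := by
  classical
  set S := sphED F le E J with hS
  set CU := Finset.univ.filter (fun u : Fin n → F => u ∈ C) with hCU
  have hmemCU : ∀ u : Fin n → F, u ∈ CU ↔ u ∈ C := by
    intro u; simp [hCU]
  -- key character sum over the code
  have key : ∀ v : Fin n → F, (∑ u ∈ CU, χ (dot u v)) =
      if v ∈ dualCode C then (CU.card : ℂ) else 0 := by
    intro v
    by_cases hv : v ∈ dualCode C
    · rw [if_pos hv]
      have : ∀ u ∈ CU, χ (dot u v) = 1 := by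
        intro u hu
        have h0 : dot v u = 0 := (mem_dualCode C v).mp hv u ((hmemCU u).mp hu)
        rw [dot_comm, h0, AddChar.map_zero_eq_one]
      rw [Finset.sum_congr rfl this, Finset.sum_const, nsmul_eq_mul, mul_one]
    · rw [if_neg hv]
      rw [mem_dualCode] at hv
      push_neg at hv
      obtain ⟨u0, hu0C, hu0⟩ := hv
      rw [dot_comm] at hu0
      obtain ⟨a, haχ⟩ := hχ
      set w : Fin n → F := (a * (dot u0 v)⁻¹) • u0 with hw
      have hwC : w ∈ C := C.smul_mem _ hu0C
      have hdw : dot w v = a := by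
        rw [hw, dot_smul_left, mul_assoc, inv_mul_cancel₀ hu0, mul_one]
      have htrans : χ a * (∑ u ∈ CU, χ (dot u v)) = ∑ u ∈ CU, χ (dot u v) := by
        rw [Finset.mul_sum]
        refine Finset.sum_equiv (Equiv.addRight w) ?_ ?_
        · intro u
          simp only [hmemCU, Equiv.coe_addRight]
          exact ⟨fun h => C.add_mem h hwC, fun h => by
            have := C.sub_mem h hwC; simpa using this⟩
        · intro u hu
          simp only [Equiv.coe_addRight]
          rw [dot_add_left, AddChar.map_add_eq_mul, hdw, mul_comm]
      have hne : χ a - 1 ≠ 0 := sub_ne_zero.mpr haχ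
      have : (χ a - 1) * (∑ u ∈ CU, χ (dot u v)) = 0 := by
        rw [sub_mul, one_mul, htrans, sub_self]
      exact (mul_eq_zero.mp this).resolve_left hne
  -- urep k belongs to the E-sphere of Irep k
  have hurepE : ∀ k, urep k ∈ sphE F le E (Irep k) := by
    intro k
    simp only [sphE, Finset.mem_filter, Finset.mem_univ, true_and, hurep k]
    exact hE.2.1 _ (hIrep k)
  -- Step 1: rewrite each summand as a double sum
  have step1 : ∀ k : Fin m, (AE le E C (Irep k) : ℂ) *
      ∑ v ∈ S, χ (dot (urep k) v)
      = ∑ u ∈ (sphE F le E (Irep k)).filter (fun u => u ∈ C), ∑ v ∈ S, χ (dot u v) := by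
    intro k
    have hcongr : ∀ u ∈ (sphE F le E (Irep k)).filter (fun u => u ∈ C),
        ∑ v ∈ S, χ (dot u v) = ∑ v ∈ S, χ (dot (urep k) v) := by
      intro u hu
      exact ha (Irep k) J (hIrep k) hJ u (Finset.mem_of_mem_filter u hu)
        (urep k) (hurepE k)
    rw [Finset.sum_congr rfl hcongr, Finset.sum_const, nsmul_eq_mul]
    rfl
  -- classifying map
  have hIdeal : ∀ u : Fin n → F, IsIdeal le (idealCl le (supp u)) :=
    fun u => idealCl_isIdeal le (supp u)
  set g : (Fin n → F) → Fin m :=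
    fun u => (hcomplete (idealCl le (supp u)) (hIdeal u)).choose with hg
  have hgspec : ∀ u : Fin n → F, E (idealCl le (supp u)) (Irep (g u)) :=
    fun u => (hcomplete (idealCl le (supp u)) (hIdeal u)).choose_spec.1
  have hgiff : ∀ (u : Fin n → F) (k : Fin m),
      g u = k ↔ E (idealCl le (supp u)) (Irep k) := by
    intro u k
    constructor
    · rintro rfl; exact hgspec u
    · intro h
      exact ((hcomplete (idealCl le (supp u)) (hIdeal u)).choose_spec.2 k h).symm
  have hfiber : ∀ k : Fin m, (sphE F le E (Irep k)).filter (fun u => u ∈ C)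
      = CU.filter (fun u => g u = k) := by
    intro k
    ext u
    simp only [Finset.mem_filter, sphE, Finset.mem_univ, true_and, hmemCU, hgiff]
    tauto
  -- Step 2: sum over fibers
  have step2 : (∑ k : Fin m, ∑ u ∈ CU.filter (fun u => g u = k), ∑ v ∈ S, χ (dot u v))
      = ∑ u ∈ CU, ∑ v ∈ S, χ (dot u v) :=
    Finset.sum_fiberwise CU g _
  -- finish
  calc ((CU.card : ℂ)) * (AED le E (dualCode C) J : ℂ)
      = ∑ v ∈ S.filter (fun v => v ∈ dualCode C), (CU.card : ℂ) := by
        rw [Finset.sum_const, nsmul_eq_mul, mul_comm]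
        rfl
    _ = ∑ v ∈ S, if v ∈ dualCode C then (CU.card : ℂ) else 0 := by
        rw [Finset.sum_filter]
    _ = ∑ v ∈ S, ∑ u ∈ CU, χ (dot u v) := by
        exact Finset.sum_congr rfl fun v _ => (key v).symm
    _ = ∑ u ∈ CU, ∑ v ∈ S, χ (dot u v) := Finset.sum_comm
    _ = ∑ k : Fin m, ∑ u ∈ CU.filter (fun u => g u = k), ∑ v ∈ S, χ (dot u v) :=
        step2.symm
    _ = ∑ k : Fin m, (AE le E C (Irep k) : ℂ) * ∑ v ∈ S, χ (dot (urep k) v) := by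
        refine Finset.sum_congr rfl fun k _ => ?_
        rw [step1 k, hfiber k]

end
end

section
/- Let P be a poset on [n], 𝔽_q a finite field, and I, J order ideals of P. The following are equivalent: (i) supp(u) ∩ (J^c)_M = ∅ for every u ∈ S_I; (ii) M(I) ∩ (J^c)_M = ∅; (iii) I ∩ (J^c)_M = ∅; (iv) I_M ∩ J^c = ∅. (Lemma 3.6.) -/
open scoped BigOperators
open Finset

noncomputable section
open scoped Classical

/- Both (iii) and (iv) say that no `a ≺ b` has `a ∉ J` and `b ∈ I`, because `I` is down-closed
and `Jᶜ` is up-closed. The set `(Jᶜ)_M` of non-minimal elements of `Jᶜ` is again up-closed, so it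
meets `I` iff it meets `M(I)`: this is (ii) ⇔ (iii). Finally (iii) ⇒ (i) as `supp u ⊆ I` for
`u ∈ S_I`, and (i) ⇒ (ii) by taking for `u` the indicator vector of `M(I)`, which lies in `S_I`. -/

section MaxSet

variable {n : ℕ} {le : Fin n → Fin n → Prop}

@[simp]
lemma mem_maxSet_iff {A : Finset (Fin n)} {a : Fin n} :
    a ∈ maxSet le A ↔ a ∈ A ∧ ∀ b ∈ A, le a b → b = a := by
  simp [maxSet]

lemma notMem_maxSet_iff {A : Finset (Fin n)} {a : Fin n} (ha : a ∈ A) :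
    a ∉ maxSet le A ↔ ∃ b ∈ A, le a b ∧ b ≠ a := by
  simp [ha]

lemma IsIdeal.compl {J : Finset (Fin n)} (hJ : IsIdeal le J) :
    IsIdeal (fun a b => le b a) Jᶜ :=
  fun a ha b hab => mem_compl.2 fun hb => mem_compl.1 ha (hJ b hb a hab)

lemma IsIdeal.sdiff_maxSet [IsPartialOrder (Fin n) le] {K : Finset (Fin n)}
    (hK : IsIdeal le K) : IsIdeal le (K \ maxSet le K) := by
  intro a ha b hba
  obtain ⟨haK, hamax⟩ := mem_sdiff.1 ha
  obtain ⟨c, hcK, hac, hca⟩ := (notMem_maxSet_iff haK).1 hamax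
  have hbK := hK a haK b hba
  refine mem_sdiff.2 ⟨hbK, (notMem_maxSet_iff hbK).2 ⟨c, hcK, trans_of le hba hac, ?_⟩⟩
  rintro rfl
  exact hca (antisymm_of le hba hac)

lemma exists_mem_maxSet_le [IsPartialOrder (Fin n) le] {A : Finset (Fin n)} {a : Fin n}
    (ha : a ∈ A) : ∃ m ∈ maxSet le A, le a m := by
  let gt : Fin n → Fin n → Prop := fun x y => le y x ∧ x ≠ y
  have : IsTrans (Fin n) gt :=
    ⟨fun x y z hxy hyz => ⟨trans_of le hyz.1 hxy.1, fun hxz => hxy.2 <|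
      antisymm_of le (hxz ▸ hyz.1) hxy.1⟩⟩
  have : Std.Irrefl gt := ⟨fun x hx => hx.2 rfl⟩
  obtain ⟨m, ⟨hmA, ham⟩, hmax⟩ := (Finite.wellFounded_of_trans_of_irrefl gt).has_min
    {m | m ∈ A ∧ le a m} ⟨a, ha, refl_of le a⟩
  refine ⟨m, mem_maxSet_iff.2 ⟨hmA, fun b hbA hmb => ?_⟩, ham⟩
  by_contra hbm
  exact hmax b ⟨hbA, trans_of le ham hmb⟩ ⟨hmb, hbm⟩

lemma maxSet_inter_eq_empty_iff [IsPartialOrder (Fin n) le] {I D : Finset (Fin n)}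
    (hD : IsIdeal (fun a b => le b a) D) : maxSet le I ∩ D = ∅ ↔ I ∩ D = ∅ := by
  refine ⟨fun h => ?_, fun h => subset_empty.1 (h ▸ inter_subset_inter_right (filter_subset _ _))⟩
  refine eq_empty_of_forall_notMem fun a ha => ?_
  obtain ⟨haI, haD⟩ := mem_inter.1 ha
  obtain ⟨m, hm, ham⟩ := exists_mem_maxSet_le (le := le) haI
  exact eq_empty_iff_forall_notMem.1 h m (mem_inter.2 ⟨hm, hD a haD m ham⟩)

lemma sdiff_maxSet_inter_eq_empty_iff {I U : Finset (Fin n)} (hI : IsIdeal le I) :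
    (I \ maxSet le I) ∩ U = ∅ ↔ ∀ a ∈ U, ∀ b ∈ I, le a b → b = a := by
  simp only [eq_empty_iff_forall_notMem, mem_inter, mem_sdiff]
  constructor
  · intro h a haU b hbI hab
    by_contra hba
    have haI := hI b hbI a hab
    exact h a ⟨⟨haI, (notMem_maxSet_iff haI).2 ⟨b, hbI, hab, hba⟩⟩, haU⟩
  · rintro h a ⟨⟨haI, hamax⟩, haU⟩
    obtain ⟨b, hbI, hab, hba⟩ := (notMem_maxSet_iff haI).1 hamax
    exact hba (h a haU b hbI hab)

end MaxSet

section Sphere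

variable {n : ℕ} {le : Fin n → Fin n → Prop} {F : Type} [Field F] [Fintype F]

lemma idealCl_maxSet [IsPartialOrder (Fin n) le] {I : Finset (Fin n)} (hI : IsIdeal le I) :
    idealCl le (maxSet le I) = I := by
  ext b
  simp only [idealCl, mem_filter, mem_univ, true_and]
  constructor
  · rintro ⟨a, ha, hba⟩
    exact hI a (mem_maxSet_iff.1 ha).1 b hba
  · exact exists_mem_maxSet_le

lemma supp_subset_of_mem_sph [Std.Refl le] {I : Finset (Fin n)} {u : Fin n → F}
    (hu : u ∈ sph F le I) : supp u ⊆ I := by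
  rw [sph, mem_filter] at hu
  intro a ha
  rw [← hu.2, idealCl, mem_filter]
  exact ⟨mem_univ a, a, ha, refl_of le a⟩

variable (F) in
lemma exists_supp_eq (s : Finset (Fin n)) : ∃ v : Fin n → F, supp v = s :=
  ⟨fun i => if i ∈ s then 1 else 0, by ext i; by_cases hi : i ∈ s <;> simp [supp, hi]⟩

end Sphere

theorem stmt_9_general {n : ℕ} (le : Fin n → Fin n → Prop)
    [IsPartialOrder (Fin n) le]
    (F : Type) [Field F] [Fintype F]
    (I J : Finset (Fin n)) (hI : IsIdeal le I) (hJ : IsIdeal le J) :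
    [ (∀ u ∈ sph F le I, supp u ∩ (Jᶜ \ maxSet (fun a b => le b a) Jᶜ) = ∅),
      maxSet le I ∩ (Jᶜ \ maxSet (fun a b => le b a) Jᶜ) = ∅,
      I ∩ (Jᶜ \ maxSet (fun a b => le b a) Jᶜ) = ∅,
      (I \ maxSet le I) ∩ Jᶜ = ∅ ].TFAE := by
  tfae_have 3 → 1 := fun h u hu =>
    subset_empty.1 (h ▸ inter_subset_inter_right (supp_subset_of_mem_sph hu))
  tfae_have 1 → 2 := fun h => by
    obtain ⟨u, hu⟩ := exists_supp_eq F (maxSet le I)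
    exact hu ▸ h u (mem_filter.2 ⟨mem_univ u, hu ▸ idealCl_maxSet hI⟩)
  tfae_have 2 ↔ 3 := maxSet_inter_eq_empty_iff hJ.compl.sdiff_maxSet
  tfae_have 3 ↔ 4 := by
    rw [inter_comm, sdiff_maxSet_inter_eq_empty_iff hJ.compl, sdiff_maxSet_inter_eq_empty_iff hI]
    exact ⟨fun h a ha b hb hab => (h b hb a ha hab).symm,
      fun h a ha b hb hba => (h b hb a ha hba).symm⟩
  tfae_finish

/-- Lemma 3.6: four equivalent conditions. -/
theorem stmt_9 {n : ℕ} (hn : 0 < n) (le : Fin n → Fin n → Prop)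
    [IsPartialOrder (Fin n) le]
    (F : Type) [Field F] [Fintype F]
    (I J : Finset (Fin n)) (hI : IsIdeal le I) (hJ : IsIdeal le J) :
    [ (∀ u ∈ sph F le I, supp u ∩ (Jᶜ \ maxSet (fun a b => le b a) Jᶜ) = ∅),
      maxSet le I ∩ (Jᶜ \ maxSet (fun a b => le b a) Jᶜ) = ∅,
      I ∩ (Jᶜ \ maxSet (fun a b => le b a) Jᶜ) = ∅,
      (I \ maxSet le I) ∩ Jᶜ = ∅ ].TFAE :=
  stmt_9_general le F I J hI hJ
end
end
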